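/- Let Ω = {(x,y) ∈ ℝ² : x > 0, y > 0, xy > 1} and define u₁(x,y) = e^{−x} and u₂(x,y) = e^{−1/y} on Ω. Then u₁ ≠ u₂ as functions on Ω, but both are continuous up to the boundary and agree on ∂Ω: for every (x,y) ∈ ∂Ω (i.e. xy = 1, x > 0), u₁(x,y) = u₂(x,y) = e^{−x}. -/

import Mathlib

open Metric Set

noncomputable section

def hypDomain : Set (EuclideanSpace ℝ (Fin 2)) :=
  {p | 0 < p 0 ∧ 0 < p 1 ∧ 1 < p 0 * p 1}

def u₁ (p : EuclideanSpace ℝ (Fin 2)) : ℝ := Real.exp (-(p 0))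

def u₂ (p : EuclideanSpace ℝ (Fin 2)) : ℝ := Real.exp (-(1 / p 1))

lemma cont_proj (i : Fin 2) : Continuous fun p : EuclideanSpace ℝ (Fin 2) => p i :=
  (EuclideanSpace.proj i : EuclideanSpace ℝ (Fin 2) →L[ℝ] ℝ).continuous

lemma isOpen_hypDomain : IsOpen hypDomain := by
  have h0 : IsOpen {p : EuclideanSpace ℝ (Fin 2) | 0 < p 0} :=
    isOpen_lt continuous_const (cont_proj 0)
  have h1 : IsOpen {p : EuclideanSpace ℝ (Fin 2) | 0 < p 1} :=
    isOpen_lt continuous_const (cont_proj 1)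
  have h2 : IsOpen {p : EuclideanSpace ℝ (Fin 2) | 1 < p 0 * p 1} :=
    isOpen_lt continuous_const ((cont_proj 0).mul (cont_proj 1))
  exact (h0.inter (h1.inter h2))

lemma closure_hypDomain : closure hypDomain =
    {p : EuclideanSpace ℝ (Fin 2) | 0 < p 0 ∧ 0 < p 1 ∧ 1 ≤ p 0 * p 1} := by
  apply subset_antisymm
  · have hclosed : IsClosed {p : EuclideanSpace ℝ (Fin 2) | 0 ≤ p 0 ∧ 0 ≤ p 1 ∧ 1 ≤ p 0 * p 1} := by
      have h0 : IsClosed {p : EuclideanSpace ℝ (Fin 2) | 0 ≤ p 0} :=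
        isClosed_le continuous_const (cont_proj 0)
      have h1 : IsClosed {p : EuclideanSpace ℝ (Fin 2) | 0 ≤ p 1} :=
        isClosed_le continuous_const (cont_proj 1)
      have h2 : IsClosed {p : EuclideanSpace ℝ (Fin 2) | 1 ≤ p 0 * p 1} :=
        isClosed_le continuous_const ((cont_proj 0).mul (cont_proj 1))
      exact h0.inter (h1.inter h2)
    have hsub : closure hypDomain ⊆ {p : EuclideanSpace ℝ (Fin 2) | 0 ≤ p 0 ∧ 0 ≤ p 1 ∧ 1 ≤ p 0 * p 1} :=
      closure_minimal (fun p hp => ⟨hp.1.le, hp.2.1.le, hp.2.2.le⟩) hclosed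
    intro p hp
    obtain ⟨h0, h1, h2⟩ := hsub hp
    have hp0 : 0 < p 0 := by
      rcases h0.lt_or_eq with h | h
      · exact h
      · exfalso; nlinarith
    have hp1 : 0 < p 1 := by
      rcases h1.lt_or_eq with h | h
      · exact h
      · exfalso; nlinarith
    exact ⟨hp0, hp1, h2⟩
  · intro p hp
    obtain ⟨h0, h1, h2⟩ := hp
    have htend : Filter.Tendsto (fun n : ℕ => (1 + 1/(n+1) : ℝ) • p) Filter.atTop (nhds p) := by
      have h : Filter.Tendsto (fun n : ℕ => (1 + 1/(n+1) : ℝ)) Filter.atTop (nhds 1) := by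
        have h' := tendsto_one_div_add_atTop_nhds_zero_nat (𝕜 := ℝ)
        have := h'.const_add (1 : ℝ)
        simpa using this
      have := h.smul_const p
      simpa using this
    refine mem_closure_of_tendsto htend (Filter.Eventually.of_forall fun n => ?_)
    have hn : (0:ℝ) < 1/(n+1) := by positivity
    have hsm : ∀ i, ((1 + 1/(n+1) : ℝ) • p) i = (1 + 1/(n+1) : ℝ) * p i := fun i => rfl
    refine ⟨?_, ?_, ?_⟩
    · rw [hsm]; positivity
    · rw [hsm]; positivity
    · rw [hsm, hsm]
      have key : (1 + 1/(n+1) : ℝ) * p 0 * ((1 + 1/(n+1) : ℝ) * p 1)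
          = (1 + 1/(n+1) : ℝ)^2 * (p 0 * p 1) := by ring
      rw [key]
      have h1' : (1:ℝ) < (1 + 1/(n+1) : ℝ)^2 := by nlinarith
      nlinarith

lemma frontier_hypDomain : frontier hypDomain =
    {p : EuclideanSpace ℝ (Fin 2) | 0 < p 0 ∧ 0 < p 1 ∧ p 0 * p 1 = 1} := by
  rw [frontier, isOpen_hypDomain.interior_eq, closure_hypDomain]
  ext p
  simp only [mem_diff, mem_setOf_eq, hypDomain]
  constructor
  · rintro ⟨⟨h0, h1, h2⟩, hn⟩
    refine ⟨h0, h1, ?_⟩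
    by_contra hne
    exact hn ⟨h0, h1, lt_of_le_of_ne h2 (Ne.symm hne)⟩
  · rintro ⟨h0, h1, h2⟩
    exact ⟨⟨h0, h1, h2.ge⟩, fun h => absurd h.2.2 (by rw [h2]; exact lt_irrefl 1)⟩

theorem nonuniqueness_example :
    (¬ ∀ p ∈ hypDomain, u₁ p = u₂ p) ∧
      ContinuousOn u₁ (closure hypDomain) ∧ ContinuousOn u₂ (closure hypDomain) ∧
      ∀ p ∈ frontier hypDomain, u₁ p = u₂ p ∧ u₁ p = Real.exp (-(p 0)) := by
  refine ⟨?_, ?_, ?_, ?_⟩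
  · intro h
    set q : EuclideanSpace ℝ (Fin 2) := (WithLp.equiv 2 (Fin 2 → ℝ)).symm ![2, 2]
    have hq0 : q 0 = 2 := rfl
    have hq1 : q 1 = 2 := rfl
    have hmem : q ∈ hypDomain := by
      refine ⟨by rw [hq0]; norm_num, by rw [hq1]; norm_num, by rw [hq0, hq1]; norm_num⟩
    have := h q hmem
    simp only [u₁, u₂, hq0, hq1] at this
    have := Real.exp_injective this
    norm_num at this
  · exact (Real.continuous_exp.comp (cont_proj 0).neg).continuousOn
  · rw [closure_hypDomain]
    refine Real.continuous_exp.comp_continuousOn ?_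
    refine ContinuousOn.neg ?_
    refine ContinuousOn.div continuousOn_const (cont_proj 1).continuousOn ?_
    intro p hp
    exact ne_of_gt hp.2.1
  · intro p hp
    rw [frontier_hypDomain] at hp
    obtain ⟨h0, h1, h2⟩ := hp
    have hinv : 1 / p 1 = p 0 := by
      field_simp
      linarith [h2]
    refine ⟨?_, rfl⟩
    simp only [u₁, u₂, hinv]
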